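/- arXiv:1302.7262 — 3 statements merged into one kernel-verified Lean document; each statement's English description precedes it below -/
import Mathlib

section
/- Let P_b = Z₀ ++ reverse(Z₁) where Z₀ and Z₁ are the ascending sequences of positions of zeros and ones respectively in the extended binary B* of length 2n+1. Then for 1 ≤ i ≤ n, the (n+1+i)-th element of P_b equals n−i+1; in particular, the last n elements of P_b, read from right to left, are 1, 2, ..., n. -/
/-- Binary representation of `ω`, most significant bit first. -/
def binRep (ω : ℕ) : List Bool := (Nat.bits ω).reverse

/-- The extended binary `B*`: `n` ones, then the one's complement of `B`, then a zero. -/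
def extBin (ω : ℕ) : List Bool :=
  List.replicate (binRep ω).length true ++ (binRep ω).map (!·) ++ [false]

/-- Ascending list of 1-indexed positions of bit `b` in the bit string `l`. -/
def posOf (l : List Bool) (b : Bool) : List ℕ :=
  ((List.range l.length).filter (fun i => l.getD i false == b)).map (· + 1)

/-- `Z₀`: ascending positions of zeros in `B*`. -/
def Z0 (ω : ℕ) : List ℕ := posOf (extBin ω) false

/-- `Z₁`: ascending positions of ones in `B*`. -/
def Z1 (ω : ℕ) : List ℕ := posOf (extBin ω) true

/-- Bitonic permutation `P_b = Z₀ ++ reverse Z₁`. -/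
def Pb (ω : ℕ) : List ℕ := Z0 ω ++ (Z1 ω).reverse

/-- The self-inverting permutation `P_s`: it pairs the elements of `P_b`
equidistant from its extremes, i.e. `P_s (b_{2n+2-i}) = b_i`. -/
def Ps (ω : ℕ) (x : ℕ) : ℕ :=
  (Pb ω).getD ((Pb ω).length - 1 - (Pb ω).idxOf x) 0

/-!
`B*` starts with `n` ones, so `Z₁` starts with `1, …, n` and all its other entries, like all
entries of `Z₀`, lie in the remaining block of length `n + 1`. Hence `P_b` splits as a list of
length `n + 1` followed by `n, n - 1, …, 1`.
-/

lemma posOf_append (l₁ l₂ : List Bool) (b : Bool) :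
    posOf (l₁ ++ l₂) b = posOf l₁ b ++ (posOf l₂ b).map (· + l₁.length) := by
  unfold posOf
  rw [List.length_append, List.range_add, List.filter_append, List.map_append]
  congr 1
  · congr 1
    refine List.filter_congr fun i hi => ?_
    rw [List.getD_append _ _ _ _ (List.mem_range.mp hi)]
  · rw [List.filter_map, List.map_map, List.map_map]
    congr 1
    · funext j
      simp only [Function.comp_apply]
      omega
    · refine List.filter_congr fun i _ => ?_
      simp only [Function.comp_apply]
      rw [List.getD_append_right _ _ _ _ (Nat.le_add_right _ _), Nat.add_sub_cancel_left]

lemma posOf_replicate_self (n : ℕ) (b : Bool) :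
    posOf (List.replicate n b) b = (List.range n).map (· + 1) := by
  unfold posOf
  rw [List.length_replicate, List.filter_eq_self.mpr]
  intro i hi
  simp [List.mem_range.mp hi]

lemma posOf_replicate_of_ne {b c : Bool} (n : ℕ) (h : c ≠ b) :
    posOf (List.replicate n b) c = [] := by
  unfold posOf
  rw [List.length_replicate, List.filter_eq_nil_iff.mpr, List.map_nil]
  intro i hi
  simp [List.mem_range.mp hi, Ne.symm h]

lemma length_posOf_false_add_length_posOf_true (l : List Bool) :
    (posOf l false).length + (posOf l true).length = l.length := by
  have h := List.length_eq_length_filter_add (l := List.range l.length)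
    (fun i => l.getD i false == true)
  rw [List.length_range] at h
  have hfalse : (List.range l.length).filter (fun i => l.getD i false == false)
      = (List.range l.length).filter (fun i => !(l.getD i false == true)) :=
    List.filter_congr fun i _ => by cases l.getD i false <;> rfl
  simp only [posOf, List.length_map, hfalse]
  omega

lemma posOf_replicate_true_append_eq (n : ℕ) (t : List Bool) :
    posOf (List.replicate n true ++ t) false ++ (posOf (List.replicate n true ++ t) true).reverse
      = ((posOf t false).map (· + n) ++ ((posOf t true).map (· + n)).reverse)
        ++ ((List.range n).map (· + 1)).reverse := by
  rw [posOf_append, posOf_append, posOf_replicate_self,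
    posOf_replicate_of_ne n Bool.false_ne_true,
    List.length_replicate, List.nil_append, List.reverse_append, List.append_assoc]

lemma getD_append_reverse_range_succ (l : List ℕ) {n i : ℕ} (hi : i < n) :
    (l ++ ((List.range n).map (· + 1)).reverse).getD (l.length + i) 0 = n - i := by
  have hlt : i < (((List.range n).map (· + 1)).reverse).length := by simpa using hi
  rw [List.getD_append_right _ _ _ _ (Nat.le_add_right _ _), Nat.add_sub_cancel_left,
    List.getD_eq_getElem _ _ hlt, List.getElem_reverse]
  simp only [List.getElem_map, List.getElem_range, List.length_map, List.length_range]
  omega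

theorem stmt7_general (ω n : ℕ) (hn : (binRep ω).length = n) :
    ∀ i, 1 ≤ i → i ≤ n → (Pb ω).getD (n + i) 0 = n - i + 1 := by
  intro i hi1 hin
  set t : List Bool := (binRep ω).map (!·) ++ [false]
  have hext : extBin ω = List.replicate n true ++ t := by
    rw [extBin, hn, List.append_assoc]
  have hprefix :
      ((posOf t false).map (· + n) ++ ((posOf t true).map (· + n)).reverse).length = n + 1 := by
    simp only [List.length_append, List.length_map, List.length_reverse,
      length_posOf_false_add_length_posOf_true, t, hn, List.length_singleton]
  rw [Pb, Z0, Z1, hext, posOf_replicate_true_append_eq,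
    show n + i = n + 1 + (i - 1) by omega, ← hprefix,
    getD_append_reverse_range_succ _ (by omega : i - 1 < n)]
  omega

/-- For `1 ≤ i ≤ n`, the `(n+1+i)`-th element of `P_b` equals `n-i+1`;
equivalently the last `n` elements of `P_b`, right to left, are `1,…,n`. -/
theorem stmt7 (ω n : ℕ) (hω : 0 < ω) (hn : (binRep ω).length = n) :
    ∀ i, 1 ≤ i → i ≤ n → (Pb ω).getD (n + i) 0 = n - i + 1 :=
  stmt7_general ω n hn
end

section
/- The sequence P_b = Z₀ ++ reverse(Z₁) is a bitonic permutation of {1,...,2n+1}: all of its 2n+1 elements are distinct elements of {1,...,2n+1}, its first |Z₀| elements are strictly increasing, and its remaining elements are strictly decreasing. -/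
lemma extBin_length (ω : ℕ) : (extBin ω).length = 2 * (binRep ω).length + 1 := by
  simp only [extBin, List.length_append, List.length_replicate, List.length_map,
    List.length_singleton]
  ring

section posOf

variable (l : List Bool)

lemma mem_posOf {b : Bool} {x : ℕ} :
    x ∈ posOf l b ↔ 1 ≤ x ∧ x ≤ l.length ∧ l.getD (x - 1) false = b := by
  simp only [posOf, List.mem_map, List.mem_filter, List.mem_range, beq_iff_eq]
  constructor
  · rintro ⟨i, ⟨hi, hb⟩, rfl⟩
    exact ⟨by omega, by omega, by simpa using hb⟩
  · rintro ⟨h1, hx, hb⟩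
    exact ⟨x - 1, ⟨by omega, hb⟩, by omega⟩

lemma posOf_pairwise_lt (b : Bool) : (posOf l b).Pairwise (· < ·) :=
  (List.pairwise_lt_range.filter _).map _ fun _ _ h => by omega

lemma posOf_disjoint : (posOf l false).Disjoint (posOf l true) := by
  intro x hfalse htrue
  rw [mem_posOf] at hfalse htrue
  exact Bool.false_ne_true (hfalse.2.2.symm.trans htrue.2.2)

lemma length_posOf_add_length_posOf :
    (posOf l false).length + (posOf l true).length = l.length := by
  simp only [posOf, List.length_map]
  have hsplit := List.length_eq_length_filter_add (l := List.range l.length)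
    (fun i => l.getD i false == true)
  rw [List.length_range] at hsplit
  have hcompl : (List.range l.length).filter (fun i => l.getD i false == false) =
      (List.range l.length).filter (fun i => !(l.getD i false == true)) :=
    List.filter_congr fun i _ => by cases l.getD i false <;> rfl
  rw [hcompl, add_comm, ← hsplit]

end posOf

theorem stmt8_general (ω n : ℕ) (hn : (binRep ω).length = n) :
    (Pb ω).length = 2*n+1 ∧ (Pb ω).Nodup ∧
    (∀ x ∈ Pb ω, x ∈ Finset.Icc 1 (2*n+1)) ∧
    List.Pairwise (· < ·) ((Pb ω).take (Z0 ω).length) ∧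
    List.Pairwise (· > ·) ((Pb ω).drop (Z0 ω).length) := by
  have hlen : (extBin ω).length = 2 * n + 1 := hn ▸ extBin_length ω
  have htake : (Pb ω).take (Z0 ω).length = Z0 ω := List.take_left
  have hdrop : (Pb ω).drop (Z0 ω).length = (Z1 ω).reverse := List.drop_left
  refine ⟨?_, ?_, ?_, ?_, ?_⟩
  · rw [Pb, List.length_append, List.length_reverse, ← hlen]
    exact length_posOf_add_length_posOf _
  · rw [Pb, List.nodup_append]
    refine ⟨(posOf_pairwise_lt _ _).nodup, List.nodup_reverse.mpr (posOf_pairwise_lt _ _).nodup,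
      fun x hx y hy hxy => posOf_disjoint _ hx (List.mem_reverse.mp (hxy ▸ hy))⟩
  · intro x hx
    rw [Pb, List.mem_append, List.mem_reverse] at hx
    rw [Finset.mem_Icc, ← hlen]
    rcases hx with hx | hx <;> exact ((mem_posOf _).mp hx).imp_right And.left
  · rw [htake]
    exact posOf_pairwise_lt _ _
  · rw [hdrop]
    exact List.pairwise_reverse.mpr (posOf_pairwise_lt _ _)

/-- `P_b` is a bitonic permutation of `{1,…,2n+1}`: its `2n+1` elements are distinct
elements of `{1,…,2n+1}`, its first `|Z₀|` elements strictly increase, and its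
remaining elements strictly decrease. -/
theorem stmt8 (ω n : ℕ) (hω : 0 < ω) (hn : (binRep ω).length = n) :
    (Pb ω).length = 2*n+1 ∧ (Pb ω).Nodup ∧
    (∀ x ∈ Pb ω, x ∈ Finset.Icc 1 (2*n+1)) ∧
    List.Pairwise (· < ·) ((Pb ω).take (Z0 ω).length) ∧
    List.Pairwise (· > ·) ((Pb ω).drop (Z0 ω).length) :=
  stmt8_general ω n hn
end

section
/- Let ω be an n-bit key with binary representation B (leading bit 1), and let f be the fixed point of the associated self-inverting permutation P_s. If ω = 2ⁿ − 1 then f = 2n+1; otherwise f = n + f₀ where f₀ is the position (1-indexed) of the leftmost zero in B. -/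
/-
Write `B` for `binRep ω` and `n` for its length. As `B* = 1ⁿ ++ ¬B ++ 0`, the zeros of `B*` are
`n + i` for the ones `i` of `B`, then `2n+1`; its ones are `1, …, n`, then `n + i` for the zeros `i`
of `B`. So `P_b` starts with `(n + ones of B) ++ reverse ((n + zeros of B) ++ [2n+1])`, and since
`B` has `n` letters this prefix has length `n + 1`: its last entry `b_{n+1}` is the head of
`(n + zeros of B) ++ [2n+1]`, that is `n + f₀` with `f₀ = idxOf false B + 1`. When `B` has no zero,
`idxOf` returns `n` and this is `2n+1`.
-/

lemma posOf_cons (x : Bool) (l : List Bool) (b : Bool) :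
    posOf (x :: l) b = (if x == b then [1] else []) ++ (posOf l b).map (· + 1) := by
  unfold posOf
  cases hx : x == b <;>
    simp [List.range_succ_eq_map, List.filter_map, List.map_map, Function.comp_def, hx]

lemma posOf_map_not (l : List Bool) (b : Bool) : posOf (l.map (!·)) b = posOf l (!b) := by
  induction l with
  | nil => rfl
  | cons x l ih =>
      simp only [List.map_cons, posOf_cons, ih]
      cases x <;> cases b <;> rfl

lemma length_posOf (l : List Bool) (b : Bool) : (posOf l b).length = l.count b := by
  induction l with
  | nil => rfl
  | cons x l ih =>
      rw [posOf_cons, List.count_cons]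
      cases hx : x == b <;> simp_all

lemma posOf_replicate_not (m : ℕ) (b : Bool) : posOf (List.replicate m b) (!b) = [] := by
  rw [← List.length_eq_zero_iff, length_posOf, List.count_replicate]
  simp

lemma headD_posOf (l : List Bool) (b : Bool) :
    (posOf l b).headD (l.length + 1) = l.idxOf b + 1 := by
  induction l with
  | nil => rfl
  | cons x l ih =>
      rw [posOf_cons, List.idxOf_cons]
      cases hx : x == b
      · cases h : posOf l b <;> simp_all
      · rfl

lemma getD_append_cons_reverse_append {α : Type*} (A C D : List α) (x d : α) :
    (A ++ x :: (C.reverse ++ D)).getD (A.length + C.length) d = C.headD x := by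
  rw [List.getD_append_right _ _ _ _ (by omega), Nat.add_sub_cancel_left]
  cases C with
  | nil => rfl
  | cons c C =>
      simp [List.getD_eq_getElem?_getD]

lemma Z0_eq (ω : ℕ) :
    Z0 ω = (posOf (binRep ω) true).map (· + (binRep ω).length) ++ [2 * (binRep ω).length + 1] := by
  have hrep := posOf_replicate_not (binRep ω).length true
  rw [Bool.not_true] at hrep
  rw [Z0, extBin, posOf_append, posOf_append, posOf_map_not, hrep]
  simp [posOf, two_mul, Nat.add_comm 1]

lemma Z1_eq (ω : ℕ) :
    Z1 ω = posOf (List.replicate (binRep ω).length true) true ++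
      (posOf (binRep ω) false).map (· + (binRep ω).length) := by
  rw [Z1, extBin, posOf_append, posOf_append, posOf_map_not]
  simp [posOf]

lemma Pb_getD_length (ω : ℕ) :
    (Pb ω).getD (binRep ω).length 0 = (binRep ω).length + ((binRep ω).idxOf false + 1) := by
  set n := (binRep ω).length
  have key := getD_append_cons_reverse_append ((posOf (binRep ω) true).map (· + n))
    ((posOf (binRep ω) false).map (· + n)) (posOf (List.replicate n true) true).reverse
    (2 * n + 1) 0
  have hcount : (posOf (binRep ω) true).length + (posOf (binRep ω) false).length = n := by
    simp [n, length_posOf]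
  rw [List.length_map, List.length_map, hcount] at key
  rw [Pb, Z0_eq, Z1_eq, List.reverse_append, List.append_assoc, List.singleton_append, key,
    ← headD_posOf]
  cases posOf (binRep ω) false <;> simp <;> omega

lemma binRep_two_pow_sub_one (n : ℕ) : binRep (2 ^ n - 1) = List.replicate n true := by
  induction n with
  | zero => rfl
  | succ n ih =>
      have : 2 ^ (n + 1) - 1 = 2 * (2 ^ n - 1) + 1 := by
        have := Nat.one_le_two_pow (n := n)
        rw [pow_succ]; omega
      rw [binRep, this, Nat.bit1_bits, List.reverse_cons, ← binRep, ih,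
        List.replicate_succ']

theorem stmt11_general (ω n : ℕ) (hn : (binRep ω).length = n) :
    (ω = 2^n - 1 → (Pb ω).getD n 0 = 2*n+1) ∧
    (ω ≠ 2^n - 1 → (Pb ω).getD n 0 = n + ((binRep ω).idxOf false + 1)) := by
  subst hn
  refine ⟨fun hω => ?_, fun _ => Pb_getD_length ω⟩
  have hidx : (binRep ω).idxOf false = (binRep ω).length := by
    rw [List.idxOf_eq_length_iff, hω, binRep_two_pow_sub_one]
    simp
  rw [Pb_getD_length, hidx]
  omega

/-- The fixed point `f = b_{n+1}` of `P_s` equals `2n+1` when `ω = 2ⁿ-1`,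
and equals `n + f₀` otherwise, where `f₀` is the 1-indexed position of the
leftmost zero of `B`. -/
theorem stmt11 (ω n : ℕ) (hω : 0 < ω) (hn : (binRep ω).length = n) :
    (ω = 2^n - 1 → (Pb ω).getD n 0 = 2*n+1) ∧
    (ω ≠ 2^n - 1 → (Pb ω).getD n 0 = n + ((binRep ω).idxOf false + 1)) :=
  stmt11_general ω n hn
end
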